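/- Let $n > k$ be integers and let $g \in L_2(\mathbb{R}^d)$ satisfy $\int_Q g = 0$ for every dyadic cube $Q$ of side length $2^{-(n-1)}$. Define the averaging operator $M_k g(x) = \frac{1}{|B_k|}\int_{B_k} g(x+y)\,dy$ with $B_k = B(0,2^{-k})$. Then $\|M_k g\|_2^2 \le C_d \, 2^{k-n} \|g\|_2^2$. -/

import Mathlib

open MeasureTheory Metric

noncomputable section

/-- Euclidean space `ℝ^d`. -/
abbrev Euc (d : ℕ) := EuclideanSpace ℝ (Fin d)

/-- The standard dyadic cube at scale `n` (side length `2^{-n}`) indexed by `m`. -/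
def dyadicCube (d : ℕ) (n : ℤ) (m : Fin d → ℤ) : Set (Euc d) :=
  {y | ∀ j, (m j : ℝ) * 2 ^ (-n) ≤ y j ∧ y j < ((m j : ℝ) + 1) * 2 ^ (-n)}

/-- Index of the dyadic cube at scale `n` containing `x`. -/
def dyadicIdx (d : ℕ) (n : ℤ) (x : Euc d) : Fin d → ℤ :=
  fun j => ⌊(2 : ℝ) ^ n * x j⌋

/-- Dyadic conditional expectation at scale `2^{-n}`. -/
def Ek (d : ℕ) (n : ℤ) (h : Euc d → ℝ) (x : Euc d) : ℝ :=
  (2 : ℝ) ^ (n * d) * ∫ y in dyadicCube d n (dyadicIdx d n x), h y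

/-- Average over the Euclidean ball of radius `2^{-k}` centered at `x`. -/
def Mk (d : ℕ) (k : ℤ) (h : Euc d → ℝ) (x : Euc d) : ℝ :=
  ((volume (ball (0 : Euc d) ((2 : ℝ) ^ (-k)))).toReal)⁻¹ *
    ∫ y in ball x ((2 : ℝ) ^ (-k)), h y

/-- Indices of dyadic cubes at scale `n` meeting the boundary of the ball `B(x, 2^{-k})`. -/
def bdryIdx (d : ℕ) (k n : ℤ) (x : Euc d) : Set (Fin d → ℤ) :=
  {m | (dyadicCube d n m ∩ frontier (ball x ((2 : ℝ) ^ (-k)))).Nonempty}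

/-- `𝓘(B_k + x, n)`: union over boundary cubes `Q` at scale `n` of `Q ∩ B(x,2^{-k})`. -/
def Ikn (d : ℕ) (k n : ℤ) (x : Euc d) : Set (Euc d) :=
  ⋃ m ∈ bdryIdx d k n x, dyadicCube d n m ∩ ball x ((2 : ℝ) ^ (-k))

/-- The operator `M_{k,n}`. -/
def Mkn (d : ℕ) (k n : ℤ) (h : Euc d → ℝ) (x : Euc d) : ℝ :=
  ((volume (ball (0 : Euc d) ((2 : ℝ) ^ (-k)))).toReal)⁻¹ * ∫ y in Ikn d k n x, h y

/-- The concentric dilation `iQ` of the dyadic cube at scale `n` indexed by `m`. -/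
def cubeDil (d : ℕ) (i : ℕ) (n : ℤ) (m : Fin d → ℤ) : Set (Euc d) :=
  {y | ∀ j, ((m j : ℝ) + 1 / 2) * 2 ^ (-n) - (i : ℝ) * 2 ^ (-n) / 2 ≤ y j ∧
      y j < ((m j : ℝ) + 1 / 2) * 2 ^ (-n) + (i : ℝ) * 2 ^ (-n) / 2}

/-!
The dyadic cubes of side `2^{-(n-1)}` lying inside `B(x, 2^{-k})` carry no integral of `g`, and
every other cube meeting the ball lies in its boundary shell of width `δ = √d 2^{-(n-1)}`. Hence
`|∫_{B(x, 2^{-k})} g| ≤ ∫_{shell} |g|`. The shell has at most `d δ 2^k` times the volume of the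
ball, and the shells `{y | 2^{-k} - δ ≤ |x - y| < 2^{-k}}` form a symmetric family, so
Cauchy–Schwarz and Tonelli give `‖M_k g‖₂ ≤ d δ 2^k ‖g‖₂`, with `(d δ 2^k)² ≤ 4 d³ 2^{k-n}`.
-/

open scoped ENNReal

section Partition

open Function

variable {ι α E : Type*} [Countable ι] [MeasurableSpace α] {μ : Measure α}
  [NormedAddCommGroup E] [NormedSpace ℝ E]

/-- Only cells not contained in `S` contribute, and those avoid `U`. -/
theorem enorm_setIntegral_le_setLIntegral_diff {Q : ι → Set α}
    (hQ : ∀ i, MeasurableSet (Q i)) (hQd : Pairwise (Disjoint on Q)) (hQu : ⋃ i, Q i = Set.univ)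
    {S U : Set α} (hS : MeasurableSet S) (hU : MeasurableSet U)
    (hQS : ∀ i, (Q i ∩ U).Nonempty → Q i ⊆ S) {f : α → E} (hf : IntegrableOn f S μ)
    (hf0 : ∀ i, Q i ⊆ S → ∫ x in Q i, f x ∂μ = 0) :
    ‖∫ x in S, f x ∂μ‖ₑ ≤ ∫⁻ x in S \ U, ‖f x‖ₑ ∂μ := by
  have hcover : ∀ T, ⋃ i, Q i ∩ T = T := fun T => by rw [← Set.iUnion_inter, hQu, Set.univ_inter]
  have hdisj : ∀ T, Pairwise (Disjoint on fun i => Q i ∩ T) := fun T i j hij =>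
    (hQd hij).mono Set.inter_subset_left Set.inter_subset_left
  have hsum : ∫ x in S, f x ∂μ = ∑' i, ∫ x in Q i ∩ S, f x ∂μ := by
    simpa only [hcover] using
      integral_iUnion (fun i => (hQ i).inter hS) (hdisj S) (by rwa [hcover])
  have hlsum : ∫⁻ x in S \ U, ‖f x‖ₑ ∂μ = ∑' i, ∫⁻ x in Q i ∩ (S \ U), ‖f x‖ₑ ∂μ := by
    simpa only [hcover] using lintegral_iUnion (fun i => (hQ i).inter (hS.diff hU)) (hdisj _) _
  rw [hsum, hlsum]
  refine enorm_tsum_le_tsum_enorm.trans (ENNReal.tsum_le_tsum fun i => ?_)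
  by_cases hi : (Q i ∩ U).Nonempty
  · rw [Set.inter_eq_left.2 (hQS i hi), hf0 i (hQS i hi), enorm_zero]
    exact zero_le
  · have hQSU : Q i ∩ S = Q i ∩ (S \ U) := by
      ext y
      exact ⟨fun h => ⟨h.1, h.2, fun hyU => hi ⟨y, h.1, hyU⟩⟩, fun h => ⟨h.1, h.2.1⟩⟩
    rw [hQSU]
    exact enorm_integral_le_lintegral_enorm _

end Partition

theorem mem_dyadicCube_iff {d : ℕ} {n : ℤ} {m : Fin d → ℤ} {y : Euc d} :
    y ∈ dyadicCube d n m ↔ dyadicIdx d n y = m := by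
  have h2 : (0 : ℝ) < 2 ^ n := by positivity
  simp only [dyadicCube, dyadicIdx, Set.mem_ofPred_eq, funext_iff, Int.floor_eq_iff, zpow_neg,
    ← div_eq_mul_inv, div_le_iff₀ h2, lt_div_iff₀ h2, mul_comm (2 ^ n : ℝ)]

theorem measurableSet_dyadicCube (d : ℕ) (n : ℤ) (m : Fin d → ℤ) :
    MeasurableSet (dyadicCube d n m) := by
  have : dyadicCube d n m =
      ⋂ j, (fun y : Euc d => y j) ⁻¹' Set.Ico (m j * 2 ^ (-n)) ((m j + 1) * 2 ^ (-n)) := by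
    ext; simp [dyadicCube]
  rw [this]
  exact MeasurableSet.iInter fun j => measurableSet_Ico.preimage (by fun_prop)

theorem pairwise_disjoint_dyadicCube (d : ℕ) (n : ℤ) :
    Pairwise (Function.onFun Disjoint (dyadicCube d n)) := fun _ _ hmm' =>
  Set.disjoint_left.2 fun _ hy hy' =>
    hmm' ((mem_dyadicCube_iff.1 hy).symm.trans (mem_dyadicCube_iff.1 hy'))

theorem iUnion_dyadicCube (d : ℕ) (n : ℤ) : ⋃ m, dyadicCube d n m = Set.univ :=
  Set.eq_univ_of_forall fun _ => Set.mem_iUnion.2 ⟨_, mem_dyadicCube_iff.2 rfl⟩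

theorem dist_le_of_mem_dyadicCube {d : ℕ} {n : ℤ} {m : Fin d → ℤ} {y z : Euc d}
    (hy : y ∈ dyadicCube d n m) (hz : z ∈ dyadicCube d n m) :
    dist y z ≤ √d * 2 ^ (-n) := by
  have hcoord : ∀ j, dist (y j) (z j) ≤ 2 ^ (-n) := fun j => by
    have := hy j; have := hz j
    rw [Real.dist_eq, abs_sub_le_iff]
    constructor <;> linarith
  calc dist y z = √(∑ j, dist (y j) (z j) ^ 2) := EuclideanSpace.dist_eq y z
    _ ≤ √(∑ _j : Fin d, ((2 : ℝ) ^ (-n)) ^ 2) := by gcongr with j; exact hcoord j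
    _ = √d * 2 ^ (-n) := by
      rw [Finset.sum_const, Finset.card_univ, Fintype.card_fin, nsmul_eq_mul,
        Real.sqrt_mul (Nat.cast_nonneg d), Real.sqrt_sq (by positivity)]

theorem enorm_setIntegral_ball_le_of_dyadic_cancel {d : ℕ} {ν : ℤ} {g : Euc d → ℝ}
    (hg0 : ∀ m, ∫ y in dyadicCube d ν m, g y = 0) {x : Euc d} {r : ℝ}
    (hg : IntegrableOn g (ball x r)) :
    ‖∫ y in ball x r, g y‖ₑ ≤ ∫⁻ y in ball x r \ ball x (r - √d * 2 ^ (-ν)), ‖g y‖ₑ := by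
  refine enorm_setIntegral_le_setLIntegral_diff (measurableSet_dyadicCube d ν)
    (pairwise_disjoint_dyadicCube d ν) (iUnion_dyadicCube d ν) measurableSet_ball
    measurableSet_ball (fun m ⟨z, hzQ, hzU⟩ y hyQ => ?_) hg fun m _ => hg0 m
  rw [mem_ball] at hzU ⊢
  linarith [dist_triangle y z x, dist_le_of_mem_dyadicCube hyQ hzQ]

section Schur

variable {α : Type*} [MeasurableSpace α] {μ : Measure α}

theorem lintegral_sq_le_measure_univ_mul {f : α → ℝ≥0∞} (hf : AEMeasurable f μ) :
    (∫⁻ y, f y ∂μ) ^ 2 ≤ μ Set.univ * ∫⁻ y, f y ^ 2 ∂μ := by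
  have H := ENNReal.lintegral_mul_le_Lp_mul_Lq μ Real.HolderConjugate.two_two hf
    (aemeasurable_const (b := (1 : ℝ≥0∞)))
  simp only [Pi.mul_apply, mul_one, ENNReal.one_rpow, lintegral_one] at H
  have hsqrt : ∀ u : ℝ≥0∞, (u ^ (1 / 2 : ℝ)) ^ 2 = u := fun u => by
    rw [← ENNReal.rpow_natCast, ← ENNReal.rpow_mul]; norm_num
  calc (∫⁻ y, f y ∂μ) ^ 2
      ≤ ((∫⁻ y, f y ^ (2 : ℝ) ∂μ) ^ (1 / 2 : ℝ) * μ Set.univ ^ (1 / 2 : ℝ)) ^ 2 := by gcongr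
    _ = μ Set.univ * ∫⁻ y, f y ^ 2 ∂μ := by
      simp only [mul_pow, hsqrt, ENNReal.rpow_two, mul_comm]

theorem lintegral_setLIntegral_le_of_symm [SFinite μ] {K : α → Set α}
    (hK : MeasurableSet {p : α × α | p.2 ∈ K p.1}) (hsymm : ∀ x y, y ∈ K x ↔ x ∈ K y)
    {C : ℝ≥0∞} (hC : ∀ x, μ (K x) ≤ C) {F : α → ℝ≥0∞} (hF : AEMeasurable F μ) :
    ∫⁻ x, ∫⁻ y in K x, F y ∂μ ∂μ ≤ C * ∫⁻ y, F y ∂μ := by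
  have hKx : ∀ x, MeasurableSet (K x) := fun x => measurable_prodMk_left hK
  calc ∫⁻ x, ∫⁻ y in K x, F y ∂μ ∂μ
      = ∫⁻ x, ∫⁻ y, {p : α × α | p.2 ∈ K p.1}.indicator (fun p => F p.2) (x, y) ∂μ ∂μ := by
        simp_rw [← lintegral_indicator (hKx _)]; rfl
    _ = ∫⁻ y, ∫⁻ x, {p : α × α | p.2 ∈ K p.1}.indicator (fun p => F p.2) (x, y) ∂μ ∂μ :=
        lintegral_lintegral_swap ((hF.comp_quasiMeasurePreserving
          (Measure.quasiMeasurePreserving_snd)).indicator hK)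
    _ = ∫⁻ y, F y * μ (K y) ∂μ := by
        congr 1 with y
        rw [← lintegral_indicator_const (hKx y)]
        congr 1 with x
        by_cases hx : x ∈ K y <;> simp [hx, hsymm x y]
    _ ≤ ∫⁻ y, F y * C ∂μ := by gcongr with y; exact hC y
    _ = C * ∫⁻ y, F y ∂μ := by rw [lintegral_mul_const'' _ hF, mul_comm]

/-- Schur's test for the symmetric kernel `(x, y) ↦ 1_{y ∈ K x}`. -/
theorem lintegral_sq_setLIntegral_le_of_symm [SFinite μ] {K : α → Set α}
    (hK : MeasurableSet {p : α × α | p.2 ∈ K p.1}) (hsymm : ∀ x y, y ∈ K x ↔ x ∈ K y)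
    {C : ℝ≥0∞} (hC : ∀ x, μ (K x) ≤ C) {F : α → ℝ≥0∞} (hF : AEMeasurable F μ) :
    ∫⁻ x, (∫⁻ y in K x, F y ∂μ) ^ 2 ∂μ ≤ C ^ 2 * ∫⁻ y, F y ^ 2 ∂μ := by
  calc ∫⁻ x, (∫⁻ y in K x, F y ∂μ) ^ 2 ∂μ
      ≤ ∫⁻ x, C * ∫⁻ y in K x, F y ^ 2 ∂μ ∂μ := by
        gcongr with x
        refine (lintegral_sq_le_measure_univ_mul hF.restrict).trans ?_
        rw [Measure.restrict_apply_univ]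
        gcongr
        exact hC x
    _ = ∫⁻ x, ∫⁻ y in K x, C * F y ^ 2 ∂μ ∂μ := by
        congr 1 with x
        rw [lintegral_const_mul'' _ (hF.pow_const 2).restrict]
    _ ≤ C * ∫⁻ y, C * F y ^ 2 ∂μ :=
        lintegral_setLIntegral_le_of_symm hK hsymm hC ((hF.pow_const 2).const_mul C)
    _ = C * (C * ∫⁻ y, F y ^ 2 ∂μ) := by rw [lintegral_const_mul'' _ (hF.pow_const 2)]
    _ = C ^ 2 * ∫⁻ y, F y ^ 2 ∂μ := by rw [← mul_assoc, sq]

end Schur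

section Shell

open Module

variable {E : Type*} [NormedAddCommGroup E] [NormedSpace ℝ E] [FiniteDimensional ℝ E]
  [MeasurableSpace E] [BorelSpace E] [Nontrivial E] (μ : Measure E) [μ.IsAddHaarMeasure]

/-- The shell is the difference of two balls whose volumes scale like `r ^ dim`; Bernoulli's
inequality `(1 - t) ^ dim ≥ 1 - dim * t` bounds the difference. -/
theorem addHaar_ball_diff_ball_le (x : E) {r δ : ℝ} (hr : 0 < r) (hδ : 0 ≤ δ) :
    μ (ball x r \ ball x (r - δ)) ≤ ENNReal.ofReal (finrank ℝ E * (δ / r)) * μ (ball x r) := by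
  set t := δ / r
  rcases le_or_gt δ r with hδr | hrδ
  · have ht1 : t ≤ 1 := div_le_one_of_le₀ hδr hr.le
    have hinner : μ (ball x (r - δ)) = ENNReal.ofReal ((1 - t) ^ finrank ℝ E) * μ (ball x r) := by
      rw [show r - δ = (1 - t) * r by simp only [t]; field_simp, Measure.addHaar_ball_mul μ x (sub_nonneg.2 ht1),
        Measure.addHaar_ball_center μ x]
    have hbernoulli : 1 - (1 - t) ^ finrank ℝ E ≤ finrank ℝ E * t := by
      have := one_add_mul_le_pow (a := -t) (by linarith [div_nonneg hδ hr.le]) (finrank ℝ E)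
      rw [← sub_eq_add_neg] at this
      linarith
    rw [measure_sdiff (ball_subset_ball (by linarith)) measurableSet_ball.nullMeasurableSet
      measure_ball_lt_top.ne, hinner]
    calc μ (ball x r) - ENNReal.ofReal ((1 - t) ^ finrank ℝ E) * μ (ball x r)
        = ENNReal.ofReal (1 - (1 - t) ^ finrank ℝ E) * μ (ball x r) := by
          rw [ENNReal.ofReal_sub _ (by positivity), ENNReal.ofReal_one, ENNReal.sub_mul
            (fun _ _ => measure_ball_lt_top.ne), one_mul]
      _ ≤ ENNReal.ofReal (finrank ℝ E * t) * μ (ball x r) := by gcongr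
  · have ht : 1 ≤ (finrank ℝ E : ℝ) * t :=
      one_le_mul_of_one_le_of_one_le (by exact_mod_cast finrank_pos)
        ((one_lt_div hr).2 hrδ).le
    calc μ (ball x r \ ball x (r - δ)) ≤ 1 * μ (ball x r) := by
          rw [one_mul]; exact measure_mono Set.sdiff_subset
      _ ≤ ENNReal.ofReal (finrank ℝ E * t) * μ (ball x r) := by
          gcongr; exact ENNReal.one_le_ofReal.2 ht

end Shell

theorem lintegral_enorm_Mk_sq_le {d : ℕ} (hd : 0 < d) (k ν : ℤ) {g : Euc d → ℝ}
    (hg : MemLp g 2 volume) (hg0 : ∀ m, ∫ y in dyadicCube d ν m, g y = 0) :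
    ∫⁻ x, ‖Mk d k g x‖ₑ ^ 2 ≤
      ENNReal.ofReal (d * √d * 2 ^ (k - ν)) ^ 2 * ∫⁻ x, ‖g x‖ₑ ^ 2 := by
  have : Nontrivial (Euc d) :=
    Module.nontrivial_of_finrank_pos (R := ℝ) (by rwa [finrank_euclideanSpace_fin])
  set r : ℝ := 2 ^ (-k)
  set δ : ℝ := √d * 2 ^ (-ν)
  set V := volume (ball (0 : Euc d) r)
  set shell : Euc d → Set (Euc d) := fun x => ball x r \ ball x (r - δ)
  have hr : 0 < r := by positivity
  have hV0 : V ≠ 0 := (measure_ball_pos volume 0 hr).ne'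
  have hVtop : V ≠ ∞ := measure_ball_lt_top.ne
  have hMk : ∀ x, ‖Mk d k g x‖ₑ ≤ V⁻¹ * ∫⁻ y in shell x, ‖g y‖ₑ := fun x => by
    rw [Mk, enorm_mul, enorm_inv (ENNReal.toReal_pos hV0 hVtop).ne', Real.enorm_toReal hVtop]
    gcongr
    exact enorm_setIntegral_ball_le_of_dyadic_cancel hg0
      (((hg.locallyIntegrable one_le_two).integrableOn_isCompact
        (isCompact_closedBall x r)).mono_set ball_subset_closedBall)
  have hshell : ∀ x, volume (shell x) ≤ ENNReal.ofReal (d * √d * 2 ^ (k - ν)) * V := fun x => by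
    have hδr : δ / r = √d * 2 ^ (k - ν) := by
      rw [mul_div_assoc, ← zpow_sub₀ two_ne_zero, neg_sub_neg]
    simpa only [finrank_euclideanSpace_fin, Measure.addHaar_ball_center volume x, hδr,
      ← mul_assoc] using addHaar_ball_diff_ball_le volume x hr (by positivity : 0 ≤ δ)
  have hK : MeasurableSet {p : Euc d × Euc d | p.2 ∈ shell p.1} :=
    (measurableSet_lt (by fun_prop) measurable_const).diff
      (measurableSet_lt (by fun_prop) measurable_const)
  have hsymm : ∀ x y, y ∈ shell x ↔ x ∈ shell y := fun x y => by
    simp only [shell, Set.mem_sdiff, mem_ball_comm]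
  calc ∫⁻ x, ‖Mk d k g x‖ₑ ^ 2
      ≤ ∫⁻ x, V⁻¹ ^ 2 * (∫⁻ y in shell x, ‖g y‖ₑ) ^ 2 := by
        gcongr with x
        rw [← mul_pow]
        exact pow_le_pow_left' (hMk x) 2
    _ = V⁻¹ ^ 2 * ∫⁻ x, (∫⁻ y in shell x, ‖g y‖ₑ) ^ 2 :=
        lintegral_const_mul' _ _ (by simp [hV0])
    _ ≤ V⁻¹ ^ 2 * ((ENNReal.ofReal (d * √d * 2 ^ (k - ν)) * V) ^ 2 * ∫⁻ x, ‖g x‖ₑ ^ 2) := by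
        gcongr
        exact lintegral_sq_setLIntegral_le_of_symm hK hsymm hshell hg.1.enorm
    _ = ENNReal.ofReal (d * √d * 2 ^ (k - ν)) ^ 2 * (V⁻¹ * V) ^ 2 * ∫⁻ x, ‖g x‖ₑ ^ 2 := by ring
    _ = ENNReal.ofReal (d * √d * 2 ^ (k - ν)) ^ 2 * ∫⁻ x, ‖g x‖ₑ ^ 2 := by
        rw [ENNReal.inv_mul_cancel hV0 hVtop, one_pow, mul_one]

/-- If `g` has vanishing integral on every dyadic cube of side `2^{-(n-1)}` and `k < n`, then
`‖M_k g‖₂² ≤ C_d 2^{k-n} ‖g‖₂²`. -/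
theorem Mk_cancellation_L2 (d : ℕ) (hd : 0 < d) :
    ∃ C : ℝ, 0 < C ∧ ∀ (k n : ℤ), k < n → ∀ g : Euc d → ℝ, MemLp g 2 volume →
      (∀ m : Fin d → ℤ, ∫ y in dyadicCube d (n - 1) m, g y = 0) →
      ∫ x, (Mk d k g x) ^ 2 ≤ C * 2 ^ (k - n) * ∫ x, (g x) ^ 2 := by
  refine ⟨4 * d ^ 3, by positivity, fun k n hkn g hg hg0 => ?_⟩
  have hconst : ((d : ℝ) * √d * 2 ^ (k - (n - 1))) ^ 2 ≤ 4 * d ^ 3 * 2 ^ (k - n) := by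
    have h1 : (2 : ℝ) ^ (k - n) ≤ 1 := zpow_le_one_of_nonpos₀ one_le_two (by omega)
    have h2 : ((2 : ℝ) ^ (k - (n - 1))) ^ 2 = 4 * 2 ^ (k - n) * 2 ^ (k - n) := by
      rw [show k - (n - 1) = (k - n) + 1 by ring, zpow_add_one₀ two_ne_zero]; ring
    rw [mul_pow, mul_pow, Real.sq_sqrt (Nat.cast_nonneg d), h2]
    have : (0 : ℝ) ≤ 4 * d ^ 3 * 2 ^ (k - n) := by positivity
    nlinarith
  have hg2 : ∫⁻ x, ‖g x‖ₑ ^ 2 = ENNReal.ofReal (∫ x, g x ^ 2) := by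
    rw [ofReal_integral_eq_lintegral_ofReal hg.integrable_sq (ae_of_all _ fun x => sq_nonneg _)]
    congr with x
    rw [Real.enorm_eq_ofReal_abs, ← ENNReal.ofReal_pow (abs_nonneg _), sq_abs]
  have hg2_nonneg : 0 ≤ ∫ x, g x ^ 2 := integral_nonneg fun x => sq_nonneg _
  rw [← ENNReal.ofReal_le_ofReal_iff (by positivity)]
  calc ENNReal.ofReal (∫ x, Mk d k g x ^ 2)
      ≤ ‖∫ x, Mk d k g x ^ 2‖ₑ := Real.ofReal_le_enorm _
    _ ≤ ∫⁻ x, ‖Mk d k g x ^ 2‖ₑ := enorm_integral_le_lintegral_enorm _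
    _ = ∫⁻ x, ‖Mk d k g x‖ₑ ^ 2 := by simp only [enorm_pow]
    _ ≤ ENNReal.ofReal (d * √d * 2 ^ (k - (n - 1))) ^ 2 * ∫⁻ x, ‖g x‖ₑ ^ 2 :=
        lintegral_enorm_Mk_sq_le hd k (n - 1) hg hg0
    _ = ENNReal.ofReal ((d * √d * 2 ^ (k - (n - 1))) ^ 2 * ∫ x, g x ^ 2) := by
        rw [hg2, ← ENNReal.ofReal_pow (by positivity), ENNReal.ofReal_mul (by positivity)]
    _ ≤ ENNReal.ofReal (4 * d ^ 3 * 2 ^ (k - n) * ∫ x, g x ^ 2) := by gcongr
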